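/- Let J = (φ_0, qh, qg) ⊂ S = K[s,t] where deg φ_0 = d, deg q = m, deg h = deg g = d − m, the pair h, g has no common factor, and φ_0, qh, qg have no common factor. If d ≤ 2m, then the least k such that the multiplication map J_d ⊗ S_k → S_{d+k} is surjective is k = m − 1. -/

import Mathlib

/- S = K[s,t]; J = (φ₀, qh, qg) with deg φ₀ = d, deg q = m, deg h = deg g = d−m.
Since all three generators have degree d, J_d is their K-span, and surjectivity
of the multiplication map J_d ⊗ S_k → S_{d+k} says exactly that every
homogeneous form of degree d+k can be written α₀φ₀ + α₁(qh) + α₂(qg) with the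
α_i homogeneous of degree k. -/

open MvPolynomial

variable (K : Type) [Field K]

/-- The multiplication map `J_d ⊗ S_k → S_{d+k}` for `J = (ψ₀, ψ₁, ψ₂)` (with
the `ψ_i` of degree `d`) is surjective. -/
def MulSurjAt (ψ₀ ψ₁ ψ₂ : MvPolynomial (Fin 2) K) (d k : ℕ) : Prop :=
  ∀ f : MvPolynomial (Fin 2) K, f.IsHomogeneous (d + k) →
    ∃ α₀ α₁ α₂ : MvPolynomial (Fin 2) K,
      α₀.IsHomogeneous k ∧ α₁.IsHomogeneous k ∧ α₂.IsHomogeneous k ∧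
      f = α₀ * ψ₀ + α₁ * ψ₁ + α₂ * ψ₂

/-! For coprime binary forms `u`, `v` of degrees `a`, `b`, the map `S_{n-a} × S_{n-b} → S_n`,
`(α, β) ↦ αu + βv`, is injective for `n = a + b - 1` (a kernel element would make `v` divide a
form of degree `b - 1`), hence bijective since both sides have dimension `a + b`; multiplying by
`S_1` propagates surjectivity to every `n ≥ a + b - 1`. Applied to `(φ₀, q)` in degree
`d + m - 1`, and then to `(h, g)` in degree `d - 1` (this is where `d ≤ 2m` enters), it writes
every form of degree `d + m - 1` through `J_d · S_{m-1}`. Conversely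
`J_d · S_k ⊆ φ₀ S_k + q S_{d+k-m}`, whose dimension is at most `(k + 1) + (d + k - m + 1)`,
less than `dim S_{d+k} = d + k + 1` when `k < m - 1`. -/

open Submodule Module

section SpanSingletonMul
variable {R A : Type*} [CommSemiring R] [Semiring A] [Algebra R A]

theorem Submodule.span_singleton_mul_eq_map (u : A) (P : Submodule R A) :
    span R {u} * P = P.map (LinearMap.mulLeft R u) := by
  rw [mul_eq_map₂, map₂_span_singleton_eq_map]
  rfl

instance Submodule.finite_span_singleton_mul (u : A) (P : Submodule R A) [Module.Finite R P] :
    Module.Finite R (span R {u} * P) := by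
  rw [span_singleton_mul_eq_map]
  infer_instance

theorem Submodule.finrank_span_singleton_mul_le [StrongRankCondition R] (u : A)
    (P : Submodule R A) [Module.Finite R P] :
    finrank R (span R {u} * P) ≤ finrank R P := by
  rw [span_singleton_mul_eq_map]
  exact finrank_map_le _ _

end SpanSingletonMul

local notation "𝒮" => MvPolynomial.homogeneousSubmodule (Fin 2) K

namespace MvPolynomial

section Domain
variable {σ R : Type*} [CommRing R] [IsDomain R]

theorem IsHomogeneous.le_of_dvd {u v : MvPolynomial σ R} {a b : ℕ} (hv : v.IsHomogeneous b)
    (hu : u.IsHomogeneous a) (hu0 : u ≠ 0) (hvu : v ∣ u) : b ≤ a := by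
  obtain ⟨w, rfl⟩ := hvu
  have hv0 : v ≠ 0 := left_ne_zero_of_mul hu0
  rw [← hu.totalDegree hu0, totalDegree_mul_of_isDomain hv0 (right_ne_zero_of_mul hu0),
    hv.totalDegree hv0]
  exact Nat.le_add_right _ _

theorem IsHomogeneous.degree_eq_zero_of_isUnit {u : MvPolynomial σ R} {a : ℕ}
    (hu : u.IsHomogeneous a) (hunit : IsUnit u) : a = 0 :=
  Nat.le_zero.mp (hu.le_of_dvd (isHomogeneous_one σ R) one_ne_zero hunit.dvd)

end Domain

instance {σ R : Type*} [CommSemiring R] [Finite σ] (n : ℕ) :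
    Module.Finite R (homogeneousSubmodule σ R n) :=
  Module.Finite.iff_fg.mpr (homogeneousSubmodule_fg σ R n)

theorem finrank_homogeneousSubmodule (σ R : Type*) [CommRing R] [StrongRankCondition R]
    [Fintype σ] (n : ℕ) :
    finrank R (homogeneousSubmodule σ R n) = (Fintype.card σ + n - 1).choose n := by
  classical
  have hset : {d : σ →₀ ℕ | d.degree = n} =
      ↑(Finset.univ.finsuppAntidiag n : Finset (σ →₀ ℕ)) := by
    ext d
    simp [Finsupp.degree_eq_sum]
  rw [homogeneousSubmodule_eq_finsupp_supported,
    (AddMonoidAlgebra.supportedEquivFinsupp _).finrank_eq, hset]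
  simp [Finset.card_finsuppAntidiag_nat_eq_choose]

theorem finrank_homogeneousSubmodule_fin_two (R : Type*) [CommRing R] [StrongRankCondition R]
    (n : ℕ) : finrank R (homogeneousSubmodule (Fin 2) R n) = n + 1 := by
  rw [finrank_homogeneousSubmodule, Fintype.card_fin, show 2 + n - 1 = n + 1 by omega,
    Nat.choose_succ_self_right]

section CommSemiring
variable {σ R : Type*} [CommSemiring R]

theorem IsHomogeneous.span_singleton_mul_le {u : MvPolynomial σ R} {a : ℕ}
    (hu : u.IsHomogeneous a) (k : ℕ) :
    span R {u} * homogeneousSubmodule σ R k ≤ homogeneousSubmodule σ R (a + k) :=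
  (mul_le_mul_left (span_le.mpr (Set.singleton_subset_iff.mpr hu)) _).trans
    (homogeneousSubmodule_mul a k)

theorem homogeneousSubmodule_succ_le_of_le_sup {u v : MvPolynomial σ R} {a b n : ℕ}
    (ha : a ≤ n) (hb : b ≤ n)
    (h : homogeneousSubmodule σ R n ≤
      span R {u} * homogeneousSubmodule σ R (n - a) ⊔
        span R {v} * homogeneousSubmodule σ R (n - b)) :
    homogeneousSubmodule σ R (n + 1) ≤
      span R {u} * homogeneousSubmodule σ R (n + 1 - a) ⊔
        span R {v} * homogeneousSubmodule σ R (n + 1 - b) := by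
  calc homogeneousSubmodule σ R (n + 1)
        = homogeneousSubmodule σ R 1 * homogeneousSubmodule σ R n := by
        rw [← homogeneousSubmodule_one_pow, pow_succ', homogeneousSubmodule_one_pow]
    _ ≤ homogeneousSubmodule σ R 1 * (span R {u} * homogeneousSubmodule σ R (n - a) ⊔
        span R {v} * homogeneousSubmodule σ R (n - b)) := by gcongr
    _ = span R {u} * (homogeneousSubmodule σ R 1 * homogeneousSubmodule σ R (n - a)) ⊔
        span R {v} * (homogeneousSubmodule σ R 1 * homogeneousSubmodule σ R (n - b)) := by
        rw [Submodule.mul_sup, mul_left_comm, mul_left_comm (homogeneousSubmodule σ R 1)]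
    _ ≤ span R {u} * homogeneousSubmodule σ R (1 + (n - a)) ⊔
        span R {v} * homogeneousSubmodule σ R (1 + (n - b)) := by
        gcongr <;> exact homogeneousSubmodule_mul 1 _
    _ = _ := by
        rw [show 1 + (n - a) = n + 1 - a by omega, show 1 + (n - b) = n + 1 - b by omega]

end CommSemiring

section Field
variable {K} {σ : Type*}

theorem IsHomogeneous.homogeneousSubmodule_le_span_singleton_mul {u : MvPolynomial σ K}
    (hu : u.IsHomogeneous 0) (hu0 : u ≠ 0) (n : ℕ) :
    homogeneousSubmodule σ K n ≤ span K {u} * homogeneousSubmodule σ K n := by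
  obtain ⟨c, rfl⟩ : ∃ c, u = C c :=
    ⟨_, totalDegree_eq_zero_iff_eq_C.mp (Nat.le_zero.mp hu.totalDegree_le)⟩
  have hc : c ≠ 0 := by simpa using hu0
  intro f hf
  refine mem_span_singleton_mul.mpr ⟨C c⁻¹ * f, IsHomogeneous.C_mul hf c⁻¹, ?_⟩
  rw [← mul_assoc, ← map_mul, mul_inv_cancel₀ hc, map_one, one_mul]

end Field

section FinTwo
variable {K}

theorem homogeneousSubmodule_le_of_isRelPrime_of_add_eq {u v : MvPolynomial (Fin 2) K}
    {a b n : ℕ} (hu : u.IsHomogeneous a) (hv : v.IsHomogeneous b) (hv0 : v ≠ 0)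
    (hrel : IsRelPrime u v) (hn : n + 1 = a + b) (ha : a ≤ n) (hb : b ≤ n) :
    𝒮 n ≤ (K ∙ u) * 𝒮 (n - a) ⊔ (K ∙ v) * 𝒮 (n - b) := by
  let Φ : 𝒮 (n - a) × 𝒮 (n - b) →ₗ[K] MvPolynomial (Fin 2) K :=
    ((LinearMap.mulLeft K u).comp (𝒮 (n - a)).subtype).coprod
      ((LinearMap.mulLeft K v).comp (𝒮 (n - b)).subtype)
  have hrange : LinearMap.range Φ = (K ∙ u) * 𝒮 (n - a) ⊔ (K ∙ v) * 𝒮 (n - b) := by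
    rw [LinearMap.range_coprod, LinearMap.range_comp, LinearMap.range_comp, range_subtype,
      range_subtype, span_singleton_mul_eq_map, span_singleton_mul_eq_map]
  have hinj : Function.Injective Φ := by
    rw [← LinearMap.ker_eq_bot, LinearMap.ker_eq_bot']
    rintro ⟨⟨x, hx⟩, ⟨y, hy⟩⟩ hxy
    have hxy : u * x + v * y = 0 := hxy
    have hx0 : x = 0 := by
      by_contra hx0
      have hvx : v ∣ x := hrel.symm.dvd_of_dvd_mul_left ⟨-y, by linear_combination hxy⟩
      have := hv.le_of_dvd hx hx0 hvx
      omega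
    have hy0 : y = 0 := by
      simpa [hx0, hv0] using hxy
    simp [hx0, hy0]
  rw [← hrange]
  refine (eq_of_le_of_finrank_eq ?_ ?_).ge
  · rw [hrange]
    refine sup_le ?_ ?_
    · simpa [show a + (n - a) = n by omega] using hu.span_singleton_mul_le (n - a)
    · simpa [show b + (n - b) = n by omega] using hv.span_singleton_mul_le (n - b)
  · rw [LinearMap.finrank_range_of_inj hinj, finrank_prod]
    simp only [finrank_homogeneousSubmodule_fin_two]
    omega

theorem homogeneousSubmodule_le_of_isRelPrime {u v : MvPolynomial (Fin 2) K} {a b n : ℕ}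
    (hu : u.IsHomogeneous a) (hv : v.IsHomogeneous b) (hrel : IsRelPrime u v)
    (hn : a + b ≤ n + 1) (ha : a ≤ n) (hb : b ≤ n) :
    𝒮 n ≤ (K ∙ u) * 𝒮 (n - a) ⊔ (K ∙ v) * 𝒮 (n - b) := by
  rcases Nat.eq_zero_or_pos a with rfl | ha0
  · by_cases hu0 : u = 0
    · have hunit : IsUnit v := hrel (hu0 ▸ dvd_zero v) dvd_rfl
      obtain rfl := hv.degree_eq_zero_of_isUnit hunit
      exact le_sup_of_le_right (hv.homogeneousSubmodule_le_span_singleton_mul hunit.ne_zero n)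
    · exact le_sup_of_le_left (hu.homogeneousSubmodule_le_span_singleton_mul hu0 n)
  have hv0 : v ≠ 0 := fun hv0 ↦
    ha0.ne' (hu.degree_eq_zero_of_isUnit (hrel dvd_rfl (hv0 ▸ dvd_zero u)))
  rcases Nat.eq_zero_or_pos b with rfl | hb0
  · exact le_sup_of_le_right (hv.homogeneousSubmodule_le_span_singleton_mul hv0 n)
  obtain ⟨k, rfl⟩ := Nat.exists_eq_add_of_le (show a + b - 1 ≤ n by omega)
  induction k with
  | zero =>
    exact homogeneousSubmodule_le_of_isRelPrime_of_add_eq hu hv hv0 hrel (by omega) (by omega)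
      (by omega)
  | succ k ih =>
    exact homogeneousSubmodule_succ_le_of_le_sup (n := a + b - 1 + k) (by omega) (by omega)
      (ih (by omega) (by omega) (by omega))

theorem not_homogeneousSubmodule_le_sup_of_lt (u v : MvPolynomial (Fin 2) K) {a b n : ℕ}
    (hdim : (n - a + 1) + (n - b + 1) < n + 1) :
    ¬ 𝒮 n ≤ (K ∙ u) * 𝒮 (n - a) ⊔ (K ∙ v) * 𝒮 (n - b) := by
  intro hle
  have := (finrank_mono hle).trans ((finrank_add_le_finrank_add_finrank _ _).trans
    (add_le_add (finrank_span_singleton_mul_le u _) (finrank_span_singleton_mul_le v _)))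
  simp only [finrank_homogeneousSubmodule_fin_two K] at this
  omega

end FinTwo

end MvPolynomial

section
variable {K}

theorem mulSurjAt_iff {ψ₀ ψ₁ ψ₂ : MvPolynomial (Fin 2) K} {d k : ℕ} :
    MulSurjAt K ψ₀ ψ₁ ψ₂ d k ↔
      𝒮 (d + k) ≤ (K ∙ ψ₀) * 𝒮 k ⊔ (K ∙ ψ₁) * 𝒮 k ⊔ (K ∙ ψ₂) * 𝒮 k := by
  simp only [MulSurjAt, SetLike.le_def, mem_sup, mem_span_singleton_mul]
  constructor
  · intro H f hf
    obtain ⟨α₀, α₁, α₂, h₀, h₁, h₂, rfl⟩ := H f hf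
    exact ⟨_, ⟨_, ⟨α₀, h₀, rfl⟩, _, ⟨α₁, h₁, rfl⟩, rfl⟩, _, ⟨α₂, h₂, rfl⟩, by ring⟩
  · intro H f hf
    obtain ⟨_, ⟨_, ⟨α₀, h₀, rfl⟩, _, ⟨α₁, h₁, rfl⟩, rfl⟩, _, ⟨α₂, h₂, rfl⟩, rfl⟩ := H hf
    exact ⟨α₀, α₁, α₂, h₀, h₁, h₂, by ring⟩

theorem mulSurjAt_sub_one_of_isRelPrime {d m : ℕ} {φ₀ q h g : MvPolynomial (Fin 2) K}
    (hm : 1 ≤ m) (hmd : m ≤ d) (hd2m : d ≤ 2 * m) (hφ₀ : φ₀.IsHomogeneous d)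
    (hq : q.IsHomogeneous m) (hh : h.IsHomogeneous (d - m)) (hg : g.IsHomogeneous (d - m))
    (hφ₀q : IsRelPrime φ₀ q) (hhg : IsRelPrime h g) :
    MulSurjAt K φ₀ (q * h) (q * g) d (m - 1) := by
  have hJ : 𝒮 (d + (m - 1)) ≤ (K ∙ φ₀) * 𝒮 (m - 1) ⊔ (K ∙ q) * 𝒮 (d - 1) := by
    simpa [show d + (m - 1) - d = m - 1 by omega, show d + (m - 1) - m = d - 1 by omega] using
      homogeneousSubmodule_le_of_isRelPrime hφ₀ hq hφ₀q (n := d + (m - 1)) (by omega)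
        (by omega) (by omega)
  have hI : 𝒮 (d - 1) ≤ (K ∙ h) * 𝒮 (m - 1) ⊔ (K ∙ g) * 𝒮 (m - 1) := by
    simpa [show d - 1 - (d - m) = m - 1 by omega] using
      homogeneousSubmodule_le_of_isRelPrime hh hg hhg (n := d - 1) (by omega) (by omega)
        (by omega)
  rw [mulSurjAt_iff]
  calc 𝒮 (d + (m - 1))
      ≤ (K ∙ φ₀) * 𝒮 (m - 1) ⊔ (K ∙ q) * ((K ∙ h) * 𝒮 (m - 1) ⊔ (K ∙ g) * 𝒮 (m - 1)) :=
        hJ.trans (by gcongr)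
    _ = (K ∙ φ₀) * 𝒮 (m - 1) ⊔ (K ∙ q * h) * 𝒮 (m - 1) ⊔ (K ∙ q * g) * 𝒮 (m - 1) := by
        rw [Submodule.mul_sup, ← mul_assoc, ← mul_assoc, span_mul_span, span_mul_span,
          Set.singleton_mul_singleton, Set.singleton_mul_singleton, sup_assoc]

theorem not_mulSurjAt_of_lt {d m k : ℕ} {φ₀ q h g : MvPolynomial (Fin 2) K} (hmd : m ≤ d)
    (hh : h.IsHomogeneous (d - m)) (hg : g.IsHomogeneous (d - m)) (hk : k + 1 < m) :
    ¬ MulSurjAt K φ₀ (q * h) (q * g) d k := by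
  have hmul : ∀ r : MvPolynomial (Fin 2) K, r.IsHomogeneous (d - m) →
      (K ∙ q * r) * 𝒮 k ≤ (K ∙ q) * 𝒮 (d + k - m) := by
    intro r hr
    rw [← Set.singleton_mul_singleton, ← span_mul_span, mul_assoc,
      show d + k - m = d - m + k by omega]
    gcongr
    exact hr.span_singleton_mul_le k
  rw [mulSurjAt_iff]
  refine fun hle ↦ not_homogeneousSubmodule_le_sup_of_lt φ₀ q (a := d) (b := m) (n := d + k)
    (by omega) (hle.trans ?_)
  rw [add_tsub_cancel_left, sup_assoc]
  gcongr
  exact sup_le (hmul h hh) (hmul g hg)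

end

theorem least_surjective_degree (d m : ℕ) (hm : 1 ≤ m)
    (hmd : m ≤ d) (hd2m : d ≤ 2 * m)
    (φ₀ q h g : MvPolynomial (Fin 2) K)
    (hφ₀ : φ₀.IsHomogeneous d) (hq : q.IsHomogeneous m)
    (hh : h.IsHomogeneous (d - m)) (hg : g.IsHomogeneous (d - m))
    (hhg : ∀ r : MvPolynomial (Fin 2) K, r ∣ h → r ∣ g → IsUnit r)
    (hcop : ∀ r : MvPolynomial (Fin 2) K, r ∣ φ₀ → r ∣ q * h → r ∣ q * g → IsUnit r) :
    IsLeast {k : ℕ | MulSurjAt K φ₀ (q * h) (q * g) d k} (m - 1) := by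
  have hφ₀q : IsRelPrime φ₀ q := fun r hrφ₀ hrq ↦ hcop r hrφ₀ (hrq.mul_right h) (hrq.mul_right g)
  refine ⟨mulSurjAt_sub_one_of_isRelPrime hm hmd hd2m hφ₀ hq hh hg hφ₀q (fun r ↦ hhg r),
    fun k hk ↦ ?_⟩
  by_contra! hlt
  exact not_mulSurjAt_of_lt hmd hh hg (by omega) hk
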